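/- arXiv:1301.4255 — 9 statements merged into one kernel-verified Lean document; each statement's English description precedes it below -/
import Mathlib

section
/- Let n ≥ 1. For all indices i, j, h, k : Fin n with i ≠ j and h ≠ k, the composition p i j ∘ p h k (apply p h k first) equals the operator T^{hk}_{ij}; that is, for every x : Fin n → ZMod 12 and every r : Fin n, (p i j (p h k x)) r = x r + x h + x k − x i − x j. -/
/-- Contextual inversion `p i j` on pitch-class segments of length `n`. -/
def p {n : ℕ} (i j : Fin n) (x : Fin n → ZMod 12) : Fin n → ZMod 12 :=
  fun r => x i + x j - x r

/-- The operator `T^{hk}_{ij}` on pitch-class segments of length `n`. -/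
def Thk {n : ℕ} (h k i j : Fin n) (x : Fin n → ZMod 12) : Fin n → ZMod 12 :=
  fun r => x r + x h + x k - x i - x j

theorem stmt0 (n : ℕ) (hn : 1 ≤ n) (i j h k : Fin n) (hij : i ≠ j) (hhk : h ≠ k) :
    p i j ∘ p h k = Thk h k i j ∧
      ∀ (x : Fin n → ZMod 12) (r : Fin n),
        p i j (p h k x) r = x r + x h + x k - x i - x j := by
  constructor
  · funext x r
    simp [p, Thk]
    ring
  · intro x r
    simp [p]
    ring
end

section
/- Let n ≥ 2 and let σ be the cyclic shift of pitch-class segments, (σ x) r = x (r + 1) with addition in Fin n. For every natural number k, σ^k ∘ p k (k+1) = p 0 1 ∘ σ^k as maps on Fin n → ZMod 12, where the indices k and k+1 are taken in Fin n (cyclically). -/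
/-- The cyclic shift `σ` on pitch-class segments of length `n`. -/
def cshift {n : ℕ} [NeZero n] (x : Fin n → ZMod 12) : Fin n → ZMod 12 :=
  fun r => x (r + 1)

open Fin.NatCast in
lemma cshift_iterate {n : ℕ} [NeZero n] (k : ℕ) (x : Fin n → ZMod 12) :
    cshift^[k] x = fun r => x (r + k) := by
  induction k generalizing x with
  | zero => simp
  | succ k ih =>
    rw [Function.iterate_succ_apply, ih]
    funext r
    simp only [cshift, Nat.cast_succ, add_assoc]

lemma p_comp_add_right {n : ℕ} (i j c : Fin n) (x : Fin n → ZMod 12) :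
    p i j (fun r => x (r + c)) = fun r => p (i + c) (j + c) x (r + c) :=
  rfl

open Fin.NatCast in
theorem stmt1_general (n : ℕ) [NeZero n] (k : ℕ) :
    (cshift (n := n))^[k] ∘ p (k : Fin n) ((k + 1 : ℕ) : Fin n) =
      p 0 1 ∘ (cshift (n := n))^[k] := by
  funext x
  have hk : ((k + 1 : ℕ) : Fin n) = 1 + k := by rw [Nat.cast_succ, add_comm]
  simp only [Function.comp_apply, cshift_iterate, p_comp_add_right, zero_add, hk]

open Fin.NatCast in
theorem stmt1 (n : ℕ) [NeZero n] (hn : 2 ≤ n) (k : ℕ) :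
    (cshift (n := n))^[k] ∘ p (k : Fin n) ((k + 1 : ℕ) : Fin n) =
      p 0 1 ∘ (cshift (n := n))^[k] :=
  stmt1_general n k
end

section
/- Let n ≥ 1. For all indices i, j : Fin n with i ≠ j and every m : ZMod 12, the contextual inversion commutes with translation and with inversion: p i j ∘ T_m = T_m ∘ p i j and p i j ∘ I = I ∘ p i j as maps on Fin n → ZMod 12. -/
/-- The translation `T_m` on pitch-class segments of length `n`. -/
def Tr {n : ℕ} (m : ZMod 12) (x : Fin n → ZMod 12) : Fin n → ZMod 12 :=
  fun r => x r + m

/-- The inversion `I` on pitch-class segments of length `n`. -/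
def Iop {n : ℕ} (x : Fin n → ZMod 12) : Fin n → ZMod 12 :=
  fun r => -(x r)

theorem stmt3 (n : ℕ) (hn : 1 ≤ n) (i j : Fin n) (hij : i ≠ j) (m : ZMod 12) :
    p i j ∘ Tr m = Tr m ∘ p i j ∧ p i j ∘ Iop = Iop ∘ p i j := by
  constructor <;> funext x r <;> simp [p, Tr, Iop] <;> ring
end

section
/- Let n ≥ 1. For all indices h, k, i, j : Fin n and every m : ZMod 12, the operator T^{hk}_{ij} commutes with translation and with inversion: T^{hk}_{ij} ∘ T_m = T_m ∘ T^{hk}_{ij} and T^{hk}_{ij} ∘ I = I ∘ T^{hk}_{ij} as maps on Fin n → ZMod 12. -/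
theorem stmt4 (n : ℕ) (hn : 1 ≤ n) (h k i j : Fin n) (m : ZMod 12) :
    Thk h k i j ∘ Tr m = Tr m ∘ Thk h k i j ∧ Thk h k i j ∘ Iop = Iop ∘ Thk h k i j := by
  constructor <;> funext x r <;> simp [Thk, Tr, Iop] <;> ring
end

section
/- Let n ≥ 1. Any two operators of the form T^{hk}_{ij} commute: for all indices h, k, i, j, h', k', i', j' : Fin n, T^{hk}_{ij} ∘ T^{h'k'}_{i'j'} = T^{h'k'}_{i'j'} ∘ T^{hk}_{ij} as maps on Fin n → ZMod 12. Consequently any subgroup of permutations of Fin n → ZMod 12 generated by a set of such operators is abelian. -/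
/-- The operator `T^{hk}_{ij}` as a permutation of pitch-class segments
(its inverse is `T^{ij}_{hk}`). -/
def ThkEquiv {n : ℕ} (h k i j : Fin n) : Equiv.Perm (Fin n → ZMod 12) where
  toFun := Thk h k i j
  invFun := Thk i j h k
  left_inv x := by funext r; simp only [Thk]; ring
  right_inv x := by funext r; simp only [Thk]; ring

theorem stmt6 (n : ℕ) (hn : 1 ≤ n) :
    (∀ h k i j h' k' i' j' : Fin n,
      Thk h k i j ∘ Thk h' k' i' j' = Thk h' k' i' j' ∘ Thk h k i j) ∧
    ∀ S : Set (Equiv.Perm (Fin n → ZMod 12)),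
      (∀ g ∈ S, ∃ h k i j : Fin n, g = ThkEquiv h k i j) →
      ∀ a ∈ Subgroup.closure S, ∀ b ∈ Subgroup.closure S, a * b = b * a := by
  have comm : ∀ h k i j h' k' i' j' : Fin n,
      Thk h k i j ∘ Thk h' k' i' j' = Thk h' k' i' j' ∘ Thk h k i j := by
    intro h k i j h' k' i' j'
    funext x r
    simp only [Function.comp, Thk]
    ring
  refine ⟨comm, ?_⟩
  intro S hS a ha b hb
  have key : ∀ g ∈ S, ∀ g' ∈ S, g * g' = g' * g := by
    intro g hg g' hg'
    obtain ⟨h, k, i, j, rfl⟩ := hS g hg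
    obtain ⟨h', k', i', j', rfl⟩ := hS g' hg'
    ext x r
    simpa [ThkEquiv, Equiv.Perm.mul_apply] using congrFun (congrFun (comm h k i j h' k' i' j') x) r
  induction ha, hb using Subgroup.closure_induction₂ with
  | mem x y hx hy => exact key x hx y hy
  | one_left x _ => simp
  | one_right x _ => simp
  | mul_left x y z _ _ _ h1 h2 => rw [mul_assoc, h2, ← mul_assoc, h1, mul_assoc]
  | mul_right y z x _ _ _ h1 h2 => rw [← mul_assoc, h1, mul_assoc, h2, ← mul_assoc]
  | inv_left x y _ _ h => exact (Commute.inv_left h).eq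
  | inv_right x y _ _ h => exact (Commute.inv_right h).eq
end

section
/- Let n ≥ 1. For all indices u, v : Fin n with u ≠ v and all indices h, k, i, j : Fin n, conjugation by the contextual inversion inverts the translation operator: p u v ∘ T^{hk}_{ij} ∘ p u v = T^{ij}_{hk} as maps on Fin n → ZMod 12 (note T^{ij}_{hk} is the inverse of T^{hk}_{ij}). -/
theorem stmt7 (n : ℕ) (hn : 1 ≤ n) (u v : Fin n) (huv : u ≠ v) (h k i j : Fin n) :
    p u v ∘ Thk h k i j ∘ p u v = Thk i j h k := by
  funext x r
  simp only [Function.comp_apply, p, Thk]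
  ring
end

section
/- Proposition (structure of G_n): let n ≥ 3 and let G_n be the subgroup of Equiv.Perm (Fin n → ZMod 12) generated by all contextual inversions p i j with i ≠ j. Then G_n is isomorphic to the semidirect product of the additive group Fin (n−1) → ZMod 12 by ZMod 2, where the nontrivial element of ZMod 2 acts by negation (a ↦ −a). -/
/-- Contextual inversion `p i j` as a permutation (it is an involution). -/
def pEquiv {n : ℕ} (i j : Fin n) : Equiv.Perm (Fin n → ZMod 12) where
  toFun := p i j
  invFun := p i j
  left_inv x := by funext r; simp only [p]; ring
  right_inv x := by funext r; simp only [p]; ring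

/-- The negation automorphism `a ↦ -a` of the abelian group `Fin m → ZMod 12`,
written multiplicatively. -/
def negAut (m : ℕ) : MulAut (Multiplicative (Fin m → ZMod 12)) :=
  { toFun := fun a => a⁻¹
    invFun := fun a => a⁻¹
    left_inv := fun a => inv_inv a
    right_inv := fun a => inv_inv a
    map_mul' := fun a b => (mul_inv_rev a b).trans (mul_comm _ _) }

/-- The action of `ZMod 2` on `Fin m → ZMod 12` in which the nontrivial element
acts by negation. -/
def negHom (m : ℕ) :
    Multiplicative (ZMod 2) →* MulAut (Multiplicative (Fin m → ZMod 12)) where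
  toFun g := if Multiplicative.toAdd g = 0 then 1 else negAut m
  map_one' := by simp
  map_mul' := by
    have hsq : negAut m * negAut m = 1 := by
      ext x
      simp [negAut]
    have h2 : ∀ c : ZMod 2, c = 0 ∨ c = 1 := by decide
    have hadd : (1 : ZMod 2) + 1 = 0 := by decide
    intro a b
    rcases h2 (Multiplicative.toAdd a) with ha | ha <;>
      rcases h2 (Multiplicative.toAdd b) with hb | hb <;>
      simp [toAdd_mul, ha, hb, hadd, hsq]

/-!
Write `n = m + 1`. For `v : Fin m → ZMod 12`, `shear v` adds to every entry of `x` the constant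
`∑ k, v k * (x k - x last)`; these shears form a copy of `(ZMod 12)^m`. Shears preserve every
difference `x r - x s` while a contextual inversion negates them all, so conjugation by an
inversion inverts a shear, and the product of two inversions is the shear by the linear form
`x a + x b - x i - x j`, whose coefficients sum to zero. Hence `(v, ε) ↦ shear v * (pEquiv a b)^ε`
is an injective homomorphism from the semidirect product, and for `m ≥ 2` its image is the group
generated by the inversions, because `shear (Pi.single k 1) = pEquiv s last * pEquiv s k` for
any index `s` other than `k` and `last`.
-/

open Multiplicative

section Shear

variable {R : Type*} [CommRing R] {m : ℕ}

def lastDiffPairing (v : Fin m → R) (x : Fin (m + 1) → R) : R :=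
  ∑ k, v k * (x k.castSucc - x (Fin.last m))

lemma lastDiffPairing_add_left (v w : Fin m → R) (x : Fin (m + 1) → R) :
    lastDiffPairing (v + w) x = lastDiffPairing v x + lastDiffPairing w x := by
  simp only [lastDiffPairing, Pi.add_apply, add_mul, Finset.sum_add_distrib]

lemma lastDiffPairing_neg_left (v : Fin m → R) (x : Fin (m + 1) → R) :
    lastDiffPairing (-v) x = -lastDiffPairing v x := by
  simp only [lastDiffPairing, Pi.neg_apply, neg_mul, Finset.sum_neg_distrib]

lemma lastDiffPairing_add_const (v : Fin m → R) (x : Fin (m + 1) → R) (c : R) :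
    lastDiffPairing v (fun r => x r + c) = lastDiffPairing v x := by
  simp only [lastDiffPairing, add_sub_add_right_eq_sub]

lemma lastDiffPairing_const_sub (v : Fin m → R) (x : Fin (m + 1) → R) (c : R) :
    lastDiffPairing v (fun r => c - x r) = -lastDiffPairing v x := by
  simp only [lastDiffPairing, ← Finset.sum_neg_distrib]
  exact Finset.sum_congr rfl fun k _ => by ring

lemma lastDiffPairing_single_left (k : Fin m) (c : R) (x : Fin (m + 1) → R) :
    lastDiffPairing (Pi.single k c) x = c * (x k.castSucc - x (Fin.last m)) := by
  simp [lastDiffPairing, Pi.single_apply]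

lemma lastDiffPairing_single_right (v : Fin m → R) (k : Fin m) :
    lastDiffPairing v (Pi.single k.castSucc 1) = v k := by
  simp [lastDiffPairing, Pi.single_apply, (Fin.castSucc_lt_last _).ne]

lemma lastDiffPairing_castSucc (u : Fin (m + 1) → R) (hu : ∑ r, u r = 0) (x : Fin (m + 1) → R) :
    lastDiffPairing (fun k => u k.castSucc) x = ∑ r, u r * x r := by
  rw [Fin.sum_univ_castSucc] at hu
  simp only [lastDiffPairing, mul_sub, Finset.sum_sub_distrib, ← Finset.sum_mul,
    Fin.sum_univ_castSucc (fun r => u r * x r), eq_neg_of_add_eq_zero_left hu]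
  ring

def shear : Multiplicative (Fin m → R) →* Equiv.Perm (Fin (m + 1) → R) where
  toFun v :=
    { toFun x r := x r + lastDiffPairing v.toAdd x
      invFun x r := x r - lastDiffPairing v.toAdd x
      left_inv x := by
        funext r
        simp only [lastDiffPairing_add_const, add_sub_cancel_right]
      right_inv x := by
        funext r
        simp only [sub_eq_add_neg, lastDiffPairing_add_const, neg_add_cancel_right] }
  map_one' := by
    ext x r
    simp [lastDiffPairing]
  map_mul' v w := by
    ext x r
    simp only [Equiv.coe_fn_mk, Equiv.Perm.mul_apply, toAdd_mul, lastDiffPairing_add_left,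
      lastDiffPairing_add_const]
    ring

@[simp]
lemma shear_apply (v : Multiplicative (Fin m → R)) (x : Fin (m + 1) → R) (r : Fin (m + 1)) :
    shear v x r = x r + lastDiffPairing v.toAdd x :=
  rfl

lemma shear_apply_sub (v : Multiplicative (Fin m → R)) (x : Fin (m + 1) → R) (r s : Fin (m + 1)) :
    shear v x r - shear v x s = x r - x s := by
  simp only [shear_apply, add_sub_add_right_eq_sub]

lemma shear_injective : Function.Injective (shear : Multiplicative (Fin m → R) →* _) := by
  refine (injective_iff_map_eq_one _).mpr fun v hv => ?_
  ext k
  have h := congrFun (congrArg (fun g : Equiv.Perm _ => g (Pi.single k.castSucc 1)) hv)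
    (Fin.last m)
  simpa [lastDiffPairing_single_right] using h

end Shear

lemma Multiplicative.zmod_two_eq_one_or_eq_ofAdd_one (g : Multiplicative (ZMod 2)) :
    g = 1 ∨ g = ofAdd 1 := by
  revert g
  decide

section Involution

variable {G : Type*} [Group G]

def involutionHom (s : G) (hs : s * s = 1) : Multiplicative (ZMod 2) →* G where
  toFun g := if g.toAdd = 0 then 1 else s
  map_one' := by simp
  map_mul' a b := by
    have h11 : (ofAdd 1 * ofAdd 1 : Multiplicative (ZMod 2)) = 1 := by decide
    rcases a.zmod_two_eq_one_or_eq_ofAdd_one with rfl | rfl <;>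
      rcases b.zmod_two_eq_one_or_eq_ofAdd_one with rfl | rfl <;>
      simp [h11, hs]

variable (s : G) (hs : s * s = 1)

@[simp]
lemma involutionHom_ofAdd_one : involutionHom s hs (ofAdd 1) = s := by
  simp [involutionHom]

lemma involutionHom_mem {H : Subgroup G} (h : s ∈ H) (g : Multiplicative (ZMod 2)) :
    involutionHom s hs g ∈ H := by
  rcases g.zmod_two_eq_one_or_eq_ofAdd_one with rfl | rfl
  · exact one_mem H
  · simpa using h

end Involution

@[simp]
lemma negHom_ofAdd_one (m : ℕ) : negHom m (ofAdd 1) = negAut m := by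
  simp [negHom]

@[simp]
lemma negAut_apply (m : ℕ) (v : Multiplicative (Fin m → ZMod 12)) : negAut m v = v⁻¹ :=
  rfl

section ContextualInversion

variable {m : ℕ}

@[simp]
lemma pEquiv_apply {n : ℕ} (i j : Fin n) (x : Fin n → ZMod 12) (r : Fin n) :
    pEquiv i j x r = x i + x j - x r :=
  rfl

lemma pEquiv_mul_self {n : ℕ} (i j : Fin n) : pEquiv i j * pEquiv i j = 1 := by
  ext x r
  simp only [Equiv.Perm.mul_apply, pEquiv_apply, Equiv.Perm.one_apply]
  ring

lemma pEquiv_mul_pEquiv_mem_range_shear (i j a b : Fin (m + 1)) :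
    pEquiv i j * pEquiv a b ∈ (shear : Multiplicative (Fin m → ZMod 12) →* _).range := by
  set u : Fin (m + 1) → ZMod 12 :=
    Pi.single a 1 + Pi.single b 1 - Pi.single i 1 - Pi.single j 1 with hu
  have hsum : ∑ r, u r = 0 := by
    simp [hu, Finset.sum_add_distrib, Finset.sum_sub_distrib]
  refine ⟨ofAdd fun k => u k.castSucc, ?_⟩
  ext x r
  simp only [shear_apply, toAdd_ofAdd, lastDiffPairing_castSucc u hsum, Equiv.Perm.mul_apply,
    pEquiv_apply]
  simp only [hu, Pi.sub_apply, Pi.add_apply, Pi.single_apply, sub_mul, add_mul, ite_mul, one_mul,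
    zero_mul, Finset.sum_sub_distrib, Finset.sum_add_distrib, Finset.sum_ite_eq', Finset.mem_univ,
    ↓reduceIte]
  ring

lemma shear_ofAdd_single_one (k s : Fin m) :
    shear (ofAdd (Pi.single k (1 : ZMod 12))) =
      pEquiv s.castSucc (Fin.last m) * pEquiv s.castSucc k.castSucc := by
  ext x r
  simp only [shear_apply, toAdd_ofAdd, lastDiffPairing_single_left, Equiv.Perm.mul_apply,
    pEquiv_apply]
  ring

lemma pEquiv_mul_shear_mul_pEquiv (a b : Fin (m + 1)) (v : Multiplicative (Fin m → ZMod 12)) :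
    pEquiv a b * shear v * pEquiv a b = shear v⁻¹ := by
  ext x r
  have hx : pEquiv a b x = fun s => (x a + x b) - x s := rfl
  simp only [Equiv.Perm.mul_apply, shear_apply, pEquiv_apply, hx, lastDiffPairing_const_sub,
    toAdd_inv, lastDiffPairing_neg_left]
  ring

lemma shear_mul_pEquiv_ne_one (hm : m ≠ 0) (v : Multiplicative (Fin m → ZMod 12))
    (a b : Fin (m + 1)) : shear v * pEquiv a b ≠ 1 := by
  intro h
  have hdiff := congrArg (fun g : Equiv.Perm _ => g (Pi.single (Fin.last m) 1) (Fin.last m) -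
    g (Pi.single (Fin.last m) 1) 0) h
  simp only [Equiv.Perm.mul_apply, shear_apply_sub, pEquiv_apply, Equiv.Perm.one_apply] at hdiff
  simp only [Pi.single_eq_same, ne_eq, Fin.zero_eq_last_iff, hm, not_false_eq_true,
    Pi.single_eq_of_ne, sub_zero, sub_sub_cancel_left] at hdiff
  exact absurd hdiff (by decide)

def contextualInversionGroup (n : ℕ) : Subgroup (Equiv.Perm (Fin n → ZMod 12)) :=
  Subgroup.closure {g | ∃ i j : Fin n, i ≠ j ∧ g = pEquiv i j}

lemma pEquiv_mem_contextualInversionGroup {n : ℕ} {i j : Fin n} (h : i ≠ j) :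
    pEquiv i j ∈ contextualInversionGroup n :=
  Subgroup.subset_closure ⟨i, j, h, rfl⟩

lemma shear_mem_contextualInversionGroup (hm : 2 ≤ m) (v : Multiplicative (Fin m → ZMod 12)) :
    shear v ∈ contextualInversionGroup (m + 1) := by
  have : Nontrivial (Fin m) := Fin.nontrivial_iff_two_le.mpr hm
  suffices ∀ v : Fin m → ZMod 12, shear (ofAdd v) ∈ contextualInversionGroup (m + 1) from
    this v.toAdd
  intro v
  induction v using Pi.single_induction with
  | zero => simpa only [ofAdd_zero, map_one] using one_mem (contextualInversionGroup (m + 1))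
  | add v w hv hw => simpa only [ofAdd_add, map_mul] using mul_mem hv hw
  | single k c =>
    obtain ⟨s, hs⟩ := exists_ne k
    have hc : Pi.single k c = c.val • (Pi.single k 1 : Fin m → ZMod 12) := by
      rw [← Pi.single_smul, nsmul_one, ZMod.natCast_zmod_val]
    rw [hc, ofAdd_nsmul, map_pow, shear_ofAdd_single_one k s]
    refine pow_mem (mul_mem ?_ ?_) _ <;> apply pEquiv_mem_contextualInversionGroup
    · exact (Fin.castSucc_lt_last s).ne
    · exact Fin.castSucc_injective m |>.ne hs

def semidirectToPerm (a b : Fin (m + 1)) :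
    Multiplicative (Fin m → ZMod 12) ⋊[negHom m] Multiplicative (ZMod 2) →*
      Equiv.Perm (Fin (m + 1) → ZMod 12) :=
  SemidirectProduct.lift shear (involutionHom (pEquiv a b) (pEquiv_mul_self a b)) fun g => by
    refine MonoidHom.ext fun v => ?_
    rcases g.zmod_two_eq_one_or_eq_ofAdd_one with rfl | rfl
    · simp
    · simp only [MonoidHom.comp_apply, MulEquiv.coe_toMonoidHom, negHom_ofAdd_one, negAut_apply,
        involutionHom_ofAdd_one, MulAut.conj_apply, inv_eq_of_mul_eq_one_right (pEquiv_mul_self a b)]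
      exact (pEquiv_mul_shear_mul_pEquiv a b v).symm

lemma semidirectToPerm_apply (a b : Fin (m + 1))
    (v : Multiplicative (Fin m → ZMod 12)) (g : Multiplicative (ZMod 2)) :
    semidirectToPerm a b ⟨v, g⟩ = shear v * involutionHom (pEquiv a b) (pEquiv_mul_self a b) g :=
  rfl

lemma semidirectToPerm_injective (hm : m ≠ 0) (a b : Fin (m + 1)) :
    Function.Injective (semidirectToPerm a b) := by
  refine (injective_iff_map_eq_one _).mpr ?_
  rintro ⟨v, g⟩ h
  rcases g.zmod_two_eq_one_or_eq_ofAdd_one with rfl | rfl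
  · rw [semidirectToPerm_apply, map_one, mul_one, ← map_one shear] at h
    rw [shear_injective h]
    rfl
  · rw [semidirectToPerm_apply, involutionHom_ofAdd_one] at h
    exact absurd h (shear_mul_pEquiv_ne_one hm v a b)

lemma range_semidirectToPerm (hm : 2 ≤ m) {a b : Fin (m + 1)} (hab : a ≠ b) :
    (semidirectToPerm a b).range = contextualInversionGroup (m + 1) := by
  apply le_antisymm
  · rintro _ ⟨⟨v, g⟩, rfl⟩
    exact mul_mem (shear_mem_contextualInversionGroup hm v)
      (involutionHom_mem _ _ (pEquiv_mem_contextualInversionGroup hab) g)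
  · refine (Subgroup.closure_le _).mpr ?_
    rintro _ ⟨i, j, -, rfl⟩
    obtain ⟨v, hv⟩ := pEquiv_mul_pEquiv_mem_range_shear i j a b
    refine ⟨⟨v, ofAdd 1⟩, ?_⟩
    rw [semidirectToPerm_apply, involutionHom_ofAdd_one, hv, mul_assoc, pEquiv_mul_self, mul_one]

noncomputable def contextualInversionGroupEquiv (hm : 2 ≤ m) :
    contextualInversionGroup (m + 1) ≃*
      Multiplicative (Fin m → ZMod 12) ⋊[negHom m] Multiplicative (ZMod 2) :=
  have hab : (0 : Fin (m + 1)) ≠ Fin.last m := by simp [Fin.ext_iff]; omega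
  (MulEquiv.subgroupCongr (range_semidirectToPerm hm hab).symm).trans
    (MonoidHom.ofInjective (semidirectToPerm_injective (by omega) 0 (Fin.last m))).symm

end ContextualInversion

theorem stmt11 (n : ℕ) (hn : 3 ≤ n) :
    Nonempty ((Subgroup.closure
        {g : Equiv.Perm (Fin n → ZMod 12) | ∃ i j : Fin n, i ≠ j ∧ g = pEquiv i j}) ≃*
      (Multiplicative (Fin (n - 1) → ZMod 12)) ⋊[negHom (n - 1)]
        Multiplicative (ZMod 2)) := by
  obtain ⟨m, rfl⟩ : ∃ m, n = m + 1 := ⟨n - 1, by omega⟩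
  -- `m + 1 - 1` reduces to `m`, so the target type is that of `contextualInversionGroupEquiv`.
  exact ⟨contextualInversionGroupEquiv (by omega)⟩
end

section
/- Proposition (odd case): let n ≥ 3 be odd. Then the subgroup of Equiv.Perm (Fin n → ZMod 12) generated by the cyclically consecutive contextual inversions {p i (i+1) : i ∈ Fin n} (indices taken cyclically in Fin n, so this set includes p (n−1) 0) equals the subgroup generated by all contextual inversions p i j with i ≠ j. -/
/-!
Contextual inversions compose like a path: `p a b * p b c * p c d = p a d`. Prefixing two
consecutive inversions therefore moves the second index two steps forward, so the consecutive
inversions generate every `p i (i + k)` with `k` odd. When `n` is odd every residue modulo `n`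
is represented by an odd natural number (add `n` to an even representative), so this covers
all `p i j`.
-/

theorem pEquiv_mul_pEquiv_mul_pEquiv {n : ℕ} (a b c d : Fin n) :
    pEquiv a b * pEquiv b c * pEquiv c d = pEquiv a d := by
  ext x r
  simp only [Equiv.Perm.mul_apply, pEquiv, Equiv.coe_fn_mk, p]
  ring

section

open Fin.CommRing

theorem Fin.exists_odd_natCast_eq {n : ℕ} [NeZero n] (hodd : Odd n) (x : Fin n) :
    ∃ k : ℕ, Odd k ∧ (k : Fin n) = x := by
  rcases Nat.even_or_odd x.val with heven | hodd'
  · exact ⟨x.val + n, heven.add_odd hodd, by simp⟩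
  · exact ⟨x.val, hodd', Fin.cast_val_eq_self x⟩

theorem pEquiv_add_odd_mem_closure {n : ℕ} [NeZero n] {k : ℕ} (hk : Odd k) (i : Fin n) :
    pEquiv i (i + (k : Fin n)) ∈
      Subgroup.closure {g : Equiv.Perm (Fin n → ZMod 12) | ∃ i : Fin n, g = pEquiv i (i + 1)} := by
  obtain ⟨m, rfl⟩ := hk
  induction m generalizing i with
  | zero => exact Subgroup.subset_closure ⟨i, by simp⟩
  | succ m ih =>
    have hshift : i + ((2 * (m + 1) + 1 : ℕ) : Fin n) = i + 1 + 1 + ((2 * m + 1 : ℕ) : Fin n) := by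
      rw [show 2 * (m + 1) + 1 = 2 * m + 1 + 1 + 1 by ring]
      push_cast
      abel
    rw [hshift, ← pEquiv_mul_pEquiv_mul_pEquiv i (i + 1) (i + 1 + 1)]
    exact mul_mem (mul_mem (Subgroup.subset_closure ⟨i, rfl⟩)
      (Subgroup.subset_closure ⟨i + 1, rfl⟩)) (ih _)

end

theorem stmt12 (n : ℕ) [NeZero n] (hn : 3 ≤ n) (hodd : Odd n) :
    Subgroup.closure
        {g : Equiv.Perm (Fin n → ZMod 12) | ∃ i : Fin n, g = pEquiv i (i + 1)} =
      Subgroup.closure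
        {g : Equiv.Perm (Fin n → ZMod 12) | ∃ i j : Fin n, i ≠ j ∧ g = pEquiv i j} := by
  apply le_antisymm
  · refine (Subgroup.closure_le _).2 ?_
    rintro g ⟨i, rfl⟩
    exact Subgroup.subset_closure ⟨i, i + 1, by simp only [ne_eq, left_eq_add, Fin.one_eq_zero_iff]; omega, rfl⟩
  · refine (Subgroup.closure_le _).2 ?_
    rintro g ⟨i, j, -, rfl⟩
    obtain ⟨k, hk, hkj⟩ := Fin.exists_odd_natCast_eq hodd (j - i)
    open Fin.CommRing in
    simpa only [hkj, add_sub_cancel, SetLike.mem_coe] using pEquiv_add_odd_mem_closure hk i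
end

section
/- Proposition (incidence, even case): let n ≥ 2 be even and let z = σ ∘ p 0 1 (apply the contextual inversion p 0 1 first, then the cyclic shift σ), viewed as a permutation of Fin n → ZMod 12. Then z^n = id. -/
/-- The cyclic shift `σ`, `(σ x) r = x (r + 1)`, as a permutation. -/
def sigmaEquiv {n : ℕ} [NeZero n] : Equiv.Perm (Fin n → ZMod 12) where
  toFun x := fun r => x (r + 1)
  invFun x := fun r => x (r - 1)
  left_inv x := by funext r; simp
  right_inv x := by funext r; simp

/-!
Two steps of `z = σ ∘ p 0 1` shift a segment by two places and add the constant `x 0 - x 2`;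
iterating, `z ^ (2 k)` shifts by `2 k` and adds `x 0 - x (2 k)`. For `n = 2 k` the shift is
trivial and the constant is `x 0 - x 0 = 0`.
-/

section

variable {n : ℕ} [NeZero n]

open Fin.NatCast

local notation "z" => (sigmaEquiv * pEquiv 0 1 : Equiv.Perm (Fin _ → ZMod 12))

lemma sigmaEquiv_mul_pEquiv_apply (x : Fin n → ZMod 12) (r : Fin n) :
    z x r = x 0 + x 1 - x (r + 1) :=
  rfl

lemma sigmaEquiv_mul_pEquiv_sq_apply (x : Fin n → ZMod 12) (r : Fin n) :
    (z ^ 2) x r = x (r + 2) + (x 0 - x 2) := by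
  rw [sq, Equiv.Perm.mul_apply]
  simp only [sigmaEquiv_mul_pEquiv_apply]
  rw [zero_add, add_assoc, one_add_one_eq_two]
  ring

lemma sigmaEquiv_mul_pEquiv_pow_two_mul_apply (k : ℕ) (x : Fin n → ZMod 12) (r : Fin n) :
    (z ^ (2 * k)) x r = x (r + (2 * k : ℕ)) + (x 0 - x (2 * k : ℕ)) := by
  induction k generalizing x with
  | zero => simp
  | succ k ih =>
    rw [mul_add_one, pow_add, Equiv.Perm.mul_apply, ih, sigmaEquiv_mul_pEquiv_sq_apply,
      sigmaEquiv_mul_pEquiv_sq_apply, sigmaEquiv_mul_pEquiv_sq_apply, zero_add]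
    push_cast
    rw [add_assoc r]
    ring

end

theorem stmt16_general (n : ℕ) [NeZero n] (heven : Even n) :
    (sigmaEquiv (n := n) * pEquiv 0 1) ^ n = 1 := by
  obtain ⟨m, rfl⟩ := heven.two_dvd
  ext x r
  rw [sigmaEquiv_mul_pEquiv_pow_two_mul_apply, Fin.natCast_self, add_zero, sub_self,
    add_zero, Equiv.Perm.one_apply]

theorem stmt16 (n : ℕ) [NeZero n] (hn : 2 ≤ n) (heven : Even n) :
    (sigmaEquiv (n := n) * pEquiv 0 1) ^ n = 1 :=
  stmt16_general n heven
end
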